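/- If X₂ is a deterministic function of V₂ (full decode-forward at the relay: the compression Ŷ₂ is constant), then the superposition noisy network coding bound R' + R'' with R' < min{I(U₁;Y₂|X₂), I(U₁,V₂;Y₃)} and R'' < min{I(X₁;Y₃|X₂,U₁), I(X₁,X₂;Y₃|U₁,V₂)} is at most the cut-set bound min{I(X₁;Y₂,Y₃|X₂), I(X₁,X₂;Y₃)}. -/
import Mathlib


open scoped Classical BigOperators

/-- Shannon entropy (base 2) of a pmf on a finite type. -/
noncomputable def ent {Ω : Type*} [Fintype Ω] (p : Ω → ℝ) : ℝ :=
  -∑ ω, p ω * Real.logb 2 (p ω)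

/-- Pushforward (marginal) pmf of `p` under the map `f`. -/
noncomputable def pmfMap {Ω γ : Type*} [Fintype Ω] (p : Ω → ℝ) (f : Ω → γ) : γ → ℝ :=
  fun c => ∑ ω, if f ω = c then p ω else 0

/-- Mutual information I(X;Y) under joint pmf `p`. -/
noncomputable def mutInfo {Ω α β : Type*} [Fintype Ω] [Fintype α] [Fintype β]
    (p : Ω → ℝ) (X : Ω → α) (Y : Ω → β) : ℝ :=
  ent (pmfMap p X) + ent (pmfMap p Y) - ent (pmfMap p fun ω => (X ω, Y ω))

/-- Conditional mutual information I(X;Y|Z) under joint pmf `p`. -/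
noncomputable def condMutInfo {Ω α β γ : Type*} [Fintype Ω] [Fintype α] [Fintype β] [Fintype γ]
    (p : Ω → ℝ) (X : Ω → α) (Y : Ω → β) (Z : Ω → γ) : ℝ :=
  ent (pmfMap p fun ω => (X ω, Z ω)) + ent (pmfMap p fun ω => (Y ω, Z ω))
    - ent (pmfMap p Z) - ent (pmfMap p fun ω => (X ω, Y ω, Z ω))

/- Projections for ω = (u₁, v₂, x₁, x₂, y₂, y₃). -/
variable {U V A B C D : Type}
def pu (ω : U × V × A × B × C × D) : U := ω.1
def pv (ω : U × V × A × B × C × D) : V := ω.2.1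
def px1 (ω : U × V × A × B × C × D) : A := ω.2.2.1
def px2 (ω : U × V × A × B × C × D) : B := ω.2.2.2.1
def py2 (ω : U × V × A × B × C × D) : C := ω.2.2.2.2.1
def py3 (ω : U × V × A × B × C × D) : D := ω.2.2.2.2.2

/-- The joint pmf factors as p(u₁)p(v₂)p(x₁|u₁)p(x₂|v₂)p(y₂,y₃|x₁,x₂). -/
def Fact6 [Fintype U] [Fintype V] [Fintype A] [Fintype B] [Fintype C] [Fintype D]
    (p : U × V × A × B × C × D → ℝ)
    (qU : U → ℝ) (qV : V → ℝ) (qX1 : U → A → ℝ) (qX2 : V → B → ℝ)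
    (qCh : A → B → C × D → ℝ) : Prop :=
  (∀ u, 0 ≤ qU u) ∧ (∀ v, 0 ≤ qV v) ∧ (∀ u x, 0 ≤ qX1 u x) ∧ (∀ v x, 0 ≤ qX2 v x) ∧
  (∀ x1 x2 y, 0 ≤ qCh x1 x2 y) ∧
  (∑ u, qU u = 1) ∧ (∑ v, qV v = 1) ∧ (∀ u, ∑ x, qX1 u x = 1) ∧
  (∀ v, ∑ x, qX2 v x = 1) ∧ (∀ x1 x2, ∑ y, qCh x1 x2 y = 1) ∧
  (∀ u v x1 x2 y2 y3, p (u, v, x1, x2, y2, y3) =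
    qU u * qV v * qX1 u x1 * qX2 v x2 * qCh x1 x2 (y2, y3))

set_option linter.unusedSectionVars false
set_option linter.unusedVariables false

section helpers
variable {Ω α β γ : Type*} [Fintype Ω] [Fintype α] [Fintype β] [Fintype γ]

lemma pmfMap_nonneg (p : Ω → ℝ) (hp0 : ∀ ω, 0 ≤ p ω) (f : Ω → α) (a : α) :
    0 ≤ pmfMap p f a :=
  Finset.sum_nonneg fun ω _ => by by_cases h : f ω = a <;> simp [h, hp0 ω]

lemma le_pmfMap (p : Ω → ℝ) (hp0 : ∀ ω, 0 ≤ p ω) (f : Ω → α) (ω : Ω) :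
    p ω ≤ pmfMap p f (f ω) := by
  have := Finset.single_le_sum (f := fun ω' => if f ω' = f ω then p ω' else 0)
    (fun ω' _ => by by_cases h : f ω' = f ω <;> simp [h, hp0 ω']) (Finset.mem_univ ω)
  simpa [pmfMap] using this

lemma pmfMap_mono (p : Ω → ℝ) (hp0 : ∀ ω, 0 ≤ p ω) {f : Ω → α} {g : Ω → β} {a : α} {b : β}
    (h : ∀ ω, f ω = a → g ω = b) : pmfMap p f a ≤ pmfMap p g b := by
  refine Finset.sum_le_sum fun ω _ => ?_
  by_cases hf : f ω = a
  · simp [hf, h ω hf]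
  · simp only [hf, if_false]
    split <;> simp [hp0 ω]

lemma sum_pmfMap_mul (p : Ω → ℝ) (f : Ω → α) (h : α → ℝ) :
    ∑ a, pmfMap p f a * h a = ∑ ω, p ω * h (f ω) := by
  simp_rw [pmfMap, Finset.sum_mul, ite_mul, zero_mul]
  rw [Finset.sum_comm]
  simp [Finset.sum_ite_eq]

lemma sum_pmfMap (p : Ω → ℝ) (f : Ω → α) : ∑ a, pmfMap p f a = ∑ ω, p ω := by
  have := sum_pmfMap_mul p f (fun _ => 1)
  simpa using this

lemma ent_pmfMap_eq (p : Ω → ℝ) (f : Ω → α) :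
    ent (pmfMap p f) = -∑ ω, p ω * Real.logb 2 (pmfMap p f (f ω)) := by
  rw [ent, sum_pmfMap_mul p f (fun a => Real.logb 2 (pmfMap p f a))]

lemma pmfMap_apply_congr (p : Ω → ℝ) {f : Ω → α} {g : Ω → β} (ω : Ω)
    (h : ∀ ω', f ω' = f ω ↔ g ω' = g ω) :
    pmfMap p f (f ω) = pmfMap p g (g ω) :=
  Finset.sum_congr rfl fun ω' _ => by rw [if_congr (h ω') rfl rfl]

lemma ent_congr (p : Ω → ℝ) {f : Ω → α} {g : Ω → β}
    (h : ∀ ω ω', f ω' = f ω ↔ g ω' = g ω) :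
    ent (pmfMap p f) = ent (pmfMap p g) := by
  rw [ent_pmfMap_eq, ent_pmfMap_eq]
  congr 1
  exact Finset.sum_congr rfl fun ω _ => by rw [pmfMap_apply_congr p ω (h ω)]

lemma marg_fst (p : Ω → ℝ) (X : Ω → α) (Z : Ω → γ) (z : γ) :
    ∑ x, pmfMap p (fun ω => (X ω, Z ω)) (x, z) = pmfMap p Z z := by
  simp_rw [pmfMap]
  rw [Finset.sum_comm]
  refine Finset.sum_congr rfl fun ω _ => ?_
  simp [Prod.ext_iff, ite_and, Finset.sum_ite_eq]

lemma cmi_sum_form (p : Ω → ℝ) (X : Ω → α) (Y : Ω → β) (Z : Ω → γ) :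
    condMutInfo p X Y Z = ∑ ω, p ω *
      (Real.logb 2 (pmfMap p (fun ω => (X ω, Y ω, Z ω)) (X ω, Y ω, Z ω))
        + Real.logb 2 (pmfMap p Z (Z ω))
        - Real.logb 2 (pmfMap p (fun ω => (X ω, Z ω)) (X ω, Z ω))
        - Real.logb 2 (pmfMap p (fun ω => (Y ω, Z ω)) (Y ω, Z ω))) := by
  have expand : ∀ (f g h k : Ω → ℝ), ∑ ω, p ω * (f ω + g ω - h ω - k ω)
      = ∑ ω, p ω * f ω + ∑ ω, p ω * g ω - ∑ ω, p ω * h ω - ∑ ω, p ω * k ω := by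
    intro f g h k
    simp_rw [mul_sub, mul_add, Finset.sum_sub_distrib, Finset.sum_add_distrib]
  rw [condMutInfo, ent_pmfMap_eq, ent_pmfMap_eq, ent_pmfMap_eq, ent_pmfMap_eq, expand]
  ring

lemma cmi_nonneg (p : Ω → ℝ) (hp0 : ∀ ω, 0 ≤ p ω) (hp1 : ∑ ω, p ω = 1)
    (X : Ω → α) (Y : Ω → β) (Z : Ω → γ) :
    0 ≤ condMutInfo p X Y Z := by
  set qXZ := pmfMap p (fun ω => (X ω, Z ω)) with hqXZ
  set qYZ := pmfMap p (fun ω => (Y ω, Z ω)) with hqYZ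
  set qZ := pmfMap p Z with hqZ
  set qT := pmfMap p (fun ω => (X ω, Y ω, Z ω)) with hqT
  have hXZ0 : ∀ a, 0 ≤ qXZ a := fun a => pmfMap_nonneg p hp0 _ a
  have hYZ0 : ∀ a, 0 ≤ qYZ a := fun a => pmfMap_nonneg p hp0 _ a
  have hZ0 : ∀ a, 0 ≤ qZ a := fun a => pmfMap_nonneg p hp0 _ a
  have hT0 : ∀ a, 0 ≤ qT a := fun a => pmfMap_nonneg p hp0 _ a
  have hmargX : ∀ z, ∑ x, qXZ (x, z) = qZ z := fun z => marg_fst p X Z z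
  have hmargY : ∀ z, ∑ y, qYZ (y, z) = qZ z := fun z => marg_fst p Y Z z
  set t : α × β × γ → ℝ :=
    fun c => qXZ (c.1, c.2.2) * qYZ (c.2.1, c.2.2) / (qT c * qZ c.2.2) with ht
  have hlog2 : (0:ℝ) < Real.log 2 := Real.log_pos (by norm_num)
  -- pointwise lower bound
  have hpt : ∀ ω, (p ω - p ω * t (X ω, Y ω, Z ω)) / Real.log 2 ≤ p ω *
      (Real.logb 2 (qT (X ω, Y ω, Z ω)) + Real.logb 2 (qZ (Z ω))
        - Real.logb 2 (qXZ (X ω, Z ω)) - Real.logb 2 (qYZ (Y ω, Z ω))) := by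
    intro ω
    rcases eq_or_lt_of_le (hp0 ω) with h0 | h0
    · simp [← h0]
    · have hT : 0 < qT (X ω, Y ω, Z ω) := lt_of_lt_of_le h0 (le_pmfMap p hp0 _ ω)
      have hZ : 0 < qZ (Z ω) := lt_of_lt_of_le h0 (le_pmfMap p hp0 Z ω)
      have hXZ : 0 < qXZ (X ω, Z ω) := lt_of_lt_of_le h0 (le_pmfMap p hp0 _ ω)
      have hYZ : 0 < qYZ (Y ω, Z ω) := lt_of_lt_of_le h0 (le_pmfMap p hp0 _ ω)
      have htpos : 0 < t (X ω, Y ω, Z ω) := by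
        rw [ht]; exact div_pos (mul_pos hXZ hYZ) (mul_pos hT hZ)
      have hlb : 1 - t (X ω, Y ω, Z ω) ≤ -Real.log (t (X ω, Y ω, Z ω)) := by
        have := Real.log_le_sub_one_of_pos htpos
        linarith
      have hlogt : Real.log (t (X ω, Y ω, Z ω)) = Real.log (qXZ (X ω, Z ω))
          + Real.log (qYZ (Y ω, Z ω)) - Real.log (qT (X ω, Y ω, Z ω))
          - Real.log (qZ (Z ω)) := by
        rw [ht]
        dsimp only
        rw [Real.log_div (ne_of_gt (mul_pos hXZ hYZ)) (ne_of_gt (mul_pos hT hZ)),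
          Real.log_mul (ne_of_gt hXZ) (ne_of_gt hYZ), Real.log_mul (ne_of_gt hT) (ne_of_gt hZ)]
        ring
      have hcomb : Real.logb 2 (qT (X ω, Y ω, Z ω)) + Real.logb 2 (qZ (Z ω))
          - Real.logb 2 (qXZ (X ω, Z ω)) - Real.logb 2 (qYZ (Y ω, Z ω))
          = -Real.log (t (X ω, Y ω, Z ω)) / Real.log 2 := by
        simp only [Real.logb]
        rw [hlogt]
        ring
      rw [hcomb]
      have h2 : p ω - p ω * t (X ω, Y ω, Z ω) ≤ p ω * -Real.log (t (X ω, Y ω, Z ω)) := by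
        nlinarith [mul_le_mul_of_nonneg_left hlb (hp0 ω)]
      calc (p ω - p ω * t (X ω, Y ω, Z ω)) / Real.log 2
          ≤ (p ω * -Real.log (t (X ω, Y ω, Z ω))) / Real.log 2 :=
            (div_le_div_iff_of_pos_right hlog2).mpr h2
        _ = p ω * (-Real.log (t (X ω, Y ω, Z ω)) / Real.log 2) := mul_div_assoc _ _ _
  -- the sum S is at most 1
  have hS : ∑ ω, p ω * t (X ω, Y ω, Z ω) ≤ 1 := by
    rw [← sum_pmfMap_mul p (fun ω => (X ω, Y ω, Z ω)) t]
    have step1 : ∀ c : α × β × γ,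
        qT c * t c ≤ qXZ (c.1, c.2.2) * qYZ (c.2.1, c.2.2) / qZ c.2.2 := by
      intro c
      by_cases h0 : qT c = 0
      · rw [h0, zero_mul]
        exact div_nonneg (mul_nonneg (hXZ0 _) (hYZ0 _)) (hZ0 _)
      · have h0' : 0 < qT c := lt_of_le_of_ne (hT0 c) (Ne.symm h0)
        have hZc : 0 < qZ c.2.2 := by
          refine lt_of_lt_of_le h0' ?_
          exact pmfMap_mono p hp0 (fun ω h => by rw [← h])
        refine le_of_eq ?_
        rw [ht]
        dsimp only
        field_simp
    calc ∑ c, qT c * t c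
        ≤ ∑ c : α × β × γ, qXZ (c.1, c.2.2) * qYZ (c.2.1, c.2.2) / qZ c.2.2 :=
          Finset.sum_le_sum fun c _ => step1 c
      _ = ∑ x, ∑ y, ∑ z, qXZ (x, z) * qYZ (y, z) / qZ z := by
          rw [Fintype.sum_prod_type]
          exact Finset.sum_congr rfl fun x _ => by rw [Fintype.sum_prod_type]
      _ = ∑ z, ∑ x, ∑ y, qXZ (x, z) * qYZ (y, z) / qZ z := by
          rw [show (∑ x, ∑ y, ∑ z, qXZ (x, z) * qYZ (y, z) / qZ z)
              = ∑ x, ∑ z, ∑ y, qXZ (x, z) * qYZ (y, z) / qZ z from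
            Finset.sum_congr rfl fun x _ => Finset.sum_comm]
          exact Finset.sum_comm
      _ = ∑ z, qZ z * qZ z / qZ z := by
          refine Finset.sum_congr rfl fun z _ => ?_
          have hms : (∑ x, qXZ (x, z)) * (∑ y, qYZ (y, z))
              = ∑ x, ∑ y, qXZ (x, z) * qYZ (y, z) := Finset.sum_mul_sum _ _ _ _
          calc ∑ x, ∑ y, qXZ (x, z) * qYZ (y, z) / qZ z
              = (∑ x, ∑ y, qXZ (x, z) * qYZ (y, z)) / qZ z := by
                rw [Finset.sum_div]
                exact Finset.sum_congr rfl fun x _ => by rw [Finset.sum_div]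
            _ = qZ z * qZ z / qZ z := by rw [← hms, hmargX, hmargY]
      _ ≤ ∑ z, qZ z := by
          refine Finset.sum_le_sum fun z _ => ?_
          by_cases h0 : qZ z = 0
          · simp [h0]
          · rw [mul_div_assoc, div_self h0, mul_one]
      _ = 1 := by rw [hqZ, sum_pmfMap, hp1]
  calc (0:ℝ) ≤ (1 - ∑ ω, p ω * t (X ω, Y ω, Z ω)) / Real.log 2 :=
        div_nonneg (by linarith) hlog2.le
    _ = ∑ ω, (p ω - p ω * t (X ω, Y ω, Z ω)) / Real.log 2 := by
        rw [← Finset.sum_div, Finset.sum_sub_distrib, hp1]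
    _ ≤ ∑ ω, p ω *
        (Real.logb 2 (qT (X ω, Y ω, Z ω)) + Real.logb 2 (qZ (Z ω))
          - Real.logb 2 (qXZ (X ω, Z ω)) - Real.logb 2 (qYZ (Y ω, Z ω))) :=
        Finset.sum_le_sum fun ω _ => hpt ω
    _ = condMutInfo p X Y Z := (cmi_sum_form p X Y Z).symm

lemma marg_mid (p : Ω → ℝ) (W : Ω → α) (Y : Ω → β) (X : Ω → γ) (w : α) (x : γ) :
    pmfMap p (fun ω => (W ω, X ω)) (w, x)
      = ∑ y, pmfMap p (fun ω => (W ω, Y ω, X ω)) (w, y, x) := by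
  simp_rw [pmfMap]
  rw [Finset.sum_comm]
  refine Finset.sum_congr rfl fun ω _ => ?_
  simp [Prod.ext_iff, ite_and, Finset.sum_ite_eq]

lemma marg_left3 (p : Ω → ℝ) (W : Ω → α) (Y : Ω → β) (X : Ω → γ) (y : β) (x : γ) :
    pmfMap p (fun ω => (Y ω, X ω)) (y, x)
      = ∑ w, pmfMap p (fun ω => (W ω, Y ω, X ω)) (w, y, x) := by
  simp_rw [pmfMap]
  rw [Finset.sum_comm]
  refine Finset.sum_congr rfl fun ω _ => ?_
  simp [Prod.ext_iff, ite_and, Finset.sum_ite_eq]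

lemma marg_both (p : Ω → ℝ) (W : Ω → α) (Y : Ω → β) (X : Ω → γ) (x : γ) :
    pmfMap p X x = ∑ w, ∑ y, pmfMap p (fun ω => (W ω, Y ω, X ω)) (w, y, x) := by
  rw [← marg_fst p W X x]
  exact Finset.sum_congr rfl fun w _ => marg_mid p W Y X w x

lemma cmi_eq_zero (p : Ω → ℝ) (hp0 : ∀ ω, 0 ≤ p ω)
    (W : Ω → α) (Y : Ω → β) (X : Ω → γ)
    (a : α → γ → ℝ) (b : β → γ → ℝ) (ha : ∀ w x, 0 ≤ a w x) (hb : ∀ y x, 0 ≤ b y x)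
    (hfac : ∀ w y x, pmfMap p (fun ω => (W ω, Y ω, X ω)) (w, y, x) = a w x * b y x) :
    condMutInfo p W Y X = 0 := by
  rw [cmi_sum_form]
  refine Finset.sum_eq_zero fun ω _ => ?_
  rcases eq_or_lt_of_le (hp0 ω) with h0 | h0
  · rw [← h0]; ring
  · have hT : 0 < pmfMap p (fun ω => (W ω, Y ω, X ω)) (W ω, Y ω, X ω) :=
      lt_of_lt_of_le h0 (le_pmfMap p hp0 _ ω)
    rw [hfac] at hT
    have hax : 0 < a (W ω) (X ω) := by
      rcases eq_or_lt_of_le (ha (W ω) (X ω)) with h | h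
      · rw [← h, zero_mul] at hT; exact absurd hT (lt_irrefl 0)
      · exact h
    have hbx : 0 < b (Y ω) (X ω) := by
      rcases eq_or_lt_of_le (hb (Y ω) (X ω)) with h | h
      · rw [← h, mul_zero] at hT; exact absurd hT (lt_irrefl 0)
      · exact h
    have hA : 0 < ∑ w', a w' (X ω) :=
      lt_of_lt_of_le hax (Finset.single_le_sum (fun i _ => ha i (X ω)) (Finset.mem_univ (W ω)))
    have hB : 0 < ∑ y', b y' (X ω) :=
      lt_of_lt_of_le hbx (Finset.single_le_sum (fun i _ => hb i (X ω)) (Finset.mem_univ (Y ω)))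
    have hWX : pmfMap p (fun ω => (W ω, X ω)) (W ω, X ω)
        = a (W ω) (X ω) * ∑ y', b y' (X ω) := by
      rw [marg_mid p W Y X]
      simp_rw [hfac]
      rw [← Finset.mul_sum]
    have hYX : pmfMap p (fun ω => (Y ω, X ω)) (Y ω, X ω)
        = (∑ w', a w' (X ω)) * b (Y ω) (X ω) := by
      rw [marg_left3 p W Y X]
      simp_rw [hfac]
      rw [← Finset.sum_mul]
    have hX : pmfMap p X (X ω) = (∑ w', a w' (X ω)) * (∑ y', b y' (X ω)) := by
      rw [marg_both p W Y X]
      simp_rw [hfac]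
      rw [Finset.sum_mul_sum]
    rw [hfac, hWX, hYX, hX,
      Real.logb_mul (ne_of_gt hax) (ne_of_gt hbx),
      Real.logb_mul (ne_of_gt hA) (ne_of_gt hB),
      Real.logb_mul (ne_of_gt hax) (ne_of_gt hB),
      Real.logb_mul (ne_of_gt hA) (ne_of_gt hbx)]
    ring

end helpers

/-- full decode-forward (X₂ a deterministic function of V₂, constant Ŷ₂):
the superposition bound min{I(U₁;Y₂|X₂), I(U₁,V₂;Y₃)} + min{I(X₁;Y₃|X₂,U₁),
I(X₁,X₂;Y₃|U₁,V₂)} is at most the cut-set bound min{I(X₁;Y₂,Y₃|X₂), I(X₁,X₂;Y₃)}. -/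
theorem stmt7 [Fintype U] [Fintype V] [Fintype A] [Fintype B] [Fintype C] [Fintype D]
    (p : U × V × A × B × C × D → ℝ)
    (hp0 : ∀ ω, 0 ≤ p ω) (hp1 : ∑ ω, p ω = 1)
    (qU : U → ℝ) (qV : V → ℝ) (qX1 : U → A → ℝ) (qX2 : V → B → ℝ)
    (qCh : A → B → C × D → ℝ) (hfac : Fact6 p qU qV qX1 qX2 qCh)
    (hdet : ∃ f : V → B, ∀ v x2, qX2 v x2 = if x2 = f v then 1 else 0) :
    min (condMutInfo p pu py2 px2) (mutInfo p (fun ω => (pu ω, pv ω)) py3)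
      + min (condMutInfo p px1 py3 (fun ω => (px2 ω, pu ω)))
          (condMutInfo p (fun ω => (px1 ω, px2 ω)) py3 (fun ω => (pu ω, pv ω)))
    ≤ min (condMutInfo p px1 (fun ω => (py2 ω, py3 ω)) px2)
        (mutInfo p (fun ω => (px1 ω, px2 ω)) py3) := by
  obtain ⟨hqU0, hqV0, hq10, hq20, hCh0, hqU1, hqV1, hq11, hq21, hCh1, hp⟩ := hfac
  clear hdet
  -- Markov: I(U ; Y2,Y3 | X1,X2) = 0
  have hT3 : condMutInfo p pu (fun ω => (py2 ω, py3 ω)) (fun ω => (px1 ω, px2 ω)) = 0 := by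
    apply cmi_eq_zero p hp0 _ _ _
      (fun u x => qU u * qX1 u x.1 * ∑ v, qV v * qX2 v x.2)
      (fun y x => qCh x.1 x.2 y)
      (fun w x => mul_nonneg (mul_nonneg (hqU0 w) (hq10 w x.1))
        (Finset.sum_nonneg fun v _ => mul_nonneg (hqV0 v) (hq20 v x.2)))
      (fun y x => hCh0 x.1 x.2 y)
    rintro u ⟨y2, y3⟩ ⟨x1, x2⟩
    simp only [pmfMap, pu, pv, px1, px2, py2, py3, Fintype.sum_prod_type, Prod.mk.injEq,
      ite_and, Finset.sum_ite_irrel, Finset.sum_ite_eq', Finset.sum_ite_eq,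
      Finset.sum_const_zero, Finset.mem_univ, if_true, hp]
    rw [Finset.mul_sum, Finset.sum_mul]
    exact Finset.sum_congr rfl fun v _ => by ring
  -- Markov: I(U,V ; Y3 | X1,X2) = 0
  have hT3' : condMutInfo p (fun ω => (pu ω, pv ω)) py3 (fun ω => (px1 ω, px2 ω)) = 0 := by
    apply cmi_eq_zero p hp0 _ _ _
      (fun w x => qU w.1 * qV w.2 * qX1 w.1 x.1 * qX2 w.2 x.2)
      (fun y3 x => ∑ y2, qCh x.1 x.2 (y2, y3))
      (fun w x => mul_nonneg (mul_nonneg (mul_nonneg (hqU0 w.1) (hqV0 w.2))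
        (hq10 w.1 x.1)) (hq20 w.2 x.2))
      (fun y x => Finset.sum_nonneg fun y2 _ => hCh0 x.1 x.2 (y2, y))
    rintro ⟨u, v⟩ y3 ⟨x1, x2⟩
    simp only [pmfMap, pu, pv, px1, px2, py2, py3, Fintype.sum_prod_type, Prod.mk.injEq,
      ite_and, Finset.sum_ite_irrel, Finset.sum_ite_eq', Finset.sum_ite_eq,
      Finset.sum_const_zero, Finset.mem_univ, if_true, hp]
    rw [Finset.mul_sum]
  have hT1 : 0 ≤ condMutInfo p pu py3 (fun ω => (px2 ω, py2 ω)) := cmi_nonneg p hp0 hp1 _ _ _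
  have hT2 : 0 ≤ condMutInfo p px1 py2 (fun ω => (pu ω, px2 ω, py3 ω)) :=
    cmi_nonneg p hp0 hp1 _ _ _
  -- canonicalizing entropies
  have c1 : ent (pmfMap p fun ω => (py2 ω, px2 ω)) = ent (pmfMap p fun ω => (px2 ω, py2 ω)) :=
    ent_congr p (fun ω ω' => by simp only [Prod.mk.injEq]; tauto)
  have c2 : ent (pmfMap p fun ω => (pu ω, py2 ω, px2 ω))
      = ent (pmfMap p fun ω => (pu ω, px2 ω, py2 ω)) :=
    ent_congr p (fun ω ω' => by simp only [Prod.mk.injEq]; tauto)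
  have c3 : ent (pmfMap p fun ω => (px1 ω, (px2 ω, pu ω)))
      = ent (pmfMap p fun ω => (pu ω, px1 ω, px2 ω)) :=
    ent_congr p (fun ω ω' => by simp only [Prod.mk.injEq]; tauto)
  have c4 : ent (pmfMap p fun ω => (py3 ω, (px2 ω, pu ω)))
      = ent (pmfMap p fun ω => (pu ω, px2 ω, py3 ω)) :=
    ent_congr p (fun ω ω' => by simp only [Prod.mk.injEq]; tauto)
  have c5 : ent (pmfMap p fun ω => (px2 ω, pu ω)) = ent (pmfMap p fun ω => (pu ω, px2 ω)) :=
    ent_congr p (fun ω ω' => by simp only [Prod.mk.injEq]; tauto)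
  have c6 : ent (pmfMap p fun ω => (px1 ω, py3 ω, (px2 ω, pu ω)))
      = ent (pmfMap p fun ω => (pu ω, px1 ω, px2 ω, py3 ω)) :=
    ent_congr p (fun ω ω' => by simp only [Prod.mk.injEq]; tauto)
  have c7 : ent (pmfMap p fun ω => ((py2 ω, py3 ω), px2 ω))
      = ent (pmfMap p fun ω => (px2 ω, py2 ω, py3 ω)) :=
    ent_congr p (fun ω ω' => by simp only [Prod.mk.injEq]; tauto)
  have c8 : ent (pmfMap p fun ω => (px1 ω, (py2 ω, py3 ω), px2 ω))
      = ent (pmfMap p fun ω => (px1 ω, px2 ω, py2 ω, py3 ω)) :=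
    ent_congr p (fun ω ω' => by simp only [Prod.mk.injEq]; tauto)
  have c9 : ent (pmfMap p fun ω => (py3 ω, (px2 ω, py2 ω)))
      = ent (pmfMap p fun ω => (px2 ω, py2 ω, py3 ω)) :=
    ent_congr p (fun ω ω' => by simp only [Prod.mk.injEq]; tauto)
  have c10 : ent (pmfMap p fun ω => (pu ω, py3 ω, (px2 ω, py2 ω)))
      = ent (pmfMap p fun ω => (pu ω, px2 ω, py2 ω, py3 ω)) :=
    ent_congr p (fun ω ω' => by simp only [Prod.mk.injEq]; tauto)
  have c11 : ent (pmfMap p fun ω => (px1 ω, (pu ω, px2 ω, py3 ω)))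
      = ent (pmfMap p fun ω => (pu ω, px1 ω, px2 ω, py3 ω)) :=
    ent_congr p (fun ω ω' => by simp only [Prod.mk.injEq]; tauto)
  have c12 : ent (pmfMap p fun ω => (py2 ω, (pu ω, px2 ω, py3 ω)))
      = ent (pmfMap p fun ω => (pu ω, px2 ω, py2 ω, py3 ω)) :=
    ent_congr p (fun ω ω' => by simp only [Prod.mk.injEq]; tauto)
  have c13 : ent (pmfMap p fun ω => (px1 ω, py2 ω, (pu ω, px2 ω, py3 ω)))
      = ent (pmfMap p fun ω => (pu ω, px1 ω, px2 ω, py2 ω, py3 ω)) :=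
    ent_congr p (fun ω ω' => by simp only [Prod.mk.injEq]; tauto)
  have c15 : ent (pmfMap p fun ω => ((py2 ω, py3 ω), (px1 ω, px2 ω)))
      = ent (pmfMap p fun ω => (px1 ω, px2 ω, py2 ω, py3 ω)) :=
    ent_congr p (fun ω ω' => by simp only [Prod.mk.injEq]; tauto)
  have c16 : ent (pmfMap p fun ω => (pu ω, (py2 ω, py3 ω), (px1 ω, px2 ω)))
      = ent (pmfMap p fun ω => (pu ω, px1 ω, px2 ω, py2 ω, py3 ω)) :=
    ent_congr p (fun ω ω' => by simp only [Prod.mk.injEq]; tauto)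
  have c17 : ent (pmfMap p fun ω => ((pu ω, pv ω), py3 ω))
      = ent (pmfMap p fun ω => (pu ω, pv ω, py3 ω)) :=
    ent_congr p (fun ω ω' => by simp only [Prod.mk.injEq]; tauto)
  have c18 : ent (pmfMap p fun ω => ((px1 ω, px2 ω), (pu ω, pv ω)))
      = ent (pmfMap p fun ω => (pu ω, pv ω, px1 ω, px2 ω)) :=
    ent_congr p (fun ω ω' => by simp only [Prod.mk.injEq]; tauto)
  have c19 : ent (pmfMap p fun ω => (py3 ω, (pu ω, pv ω)))
      = ent (pmfMap p fun ω => (pu ω, pv ω, py3 ω)) :=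
    ent_congr p (fun ω ω' => by simp only [Prod.mk.injEq]; tauto)
  have c20 : ent (pmfMap p fun ω => ((px1 ω, px2 ω), py3 ω, (pu ω, pv ω)))
      = ent (pmfMap p fun ω => (pu ω, pv ω, px1 ω, px2 ω, py3 ω)) :=
    ent_congr p (fun ω ω' => by simp only [Prod.mk.injEq]; tauto)
  have c21 : ent (pmfMap p fun ω => ((px1 ω, px2 ω), py3 ω))
      = ent (pmfMap p fun ω => (px1 ω, px2 ω, py3 ω)) :=
    ent_congr p (fun ω ω' => by simp only [Prod.mk.injEq]; tauto)
  have c22 : ent (pmfMap p fun ω => ((pu ω, pv ω), (px1 ω, px2 ω)))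
      = ent (pmfMap p fun ω => (pu ω, pv ω, px1 ω, px2 ω)) :=
    ent_congr p (fun ω ω' => by simp only [Prod.mk.injEq]; tauto)
  have c23 : ent (pmfMap p fun ω => ((pu ω, pv ω), py3 ω, (px1 ω, px2 ω)))
      = ent (pmfMap p fun ω => (pu ω, pv ω, px1 ω, px2 ω, py3 ω)) :=
    ent_congr p (fun ω ω' => by simp only [Prod.mk.injEq]; tauto)
  have c24 : ent (pmfMap p fun ω => (py3 ω, (px1 ω, px2 ω)))
      = ent (pmfMap p fun ω => (px1 ω, px2 ω, py3 ω)) :=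
    ent_congr p (fun ω ω' => by simp only [Prod.mk.injEq]; tauto)
  -- chain-rule identities
  have hEid : condMutInfo p px1 (fun ω => (py2 ω, py3 ω)) px2
      = condMutInfo p pu py2 px2 + condMutInfo p px1 py3 (fun ω => (px2 ω, pu ω))
        + condMutInfo p pu py3 (fun ω => (px2 ω, py2 ω))
        + condMutInfo p px1 py2 (fun ω => (pu ω, px2 ω, py3 ω))
        - condMutInfo p pu (fun ω => (py2 ω, py3 ω)) (fun ω => (px1 ω, px2 ω)) := by
    simp only [condMutInfo]
    rw [c1, c2, c3, c4, c5, c6, c7, c8, c9, c10, c11, c12, c13, c15, c16]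
    ring
  have hFid : mutInfo p (fun ω => (px1 ω, px2 ω)) py3
      = mutInfo p (fun ω => (pu ω, pv ω)) py3
        + condMutInfo p (fun ω => (px1 ω, px2 ω)) py3 (fun ω => (pu ω, pv ω))
        - condMutInfo p (fun ω => (pu ω, pv ω)) py3 (fun ω => (px1 ω, px2 ω)) := by
    simp only [condMutInfo, mutInfo]
    rw [c17, c18, c19, c20, c21, c22, c23, c24]
    ring
  refine le_min ?_ ?_
  · calc min (condMutInfo p pu py2 px2) (mutInfo p (fun ω => (pu ω, pv ω)) py3)
        + min (condMutInfo p px1 py3 (fun ω => (px2 ω, pu ω)))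
            (condMutInfo p (fun ω => (px1 ω, px2 ω)) py3 (fun ω => (pu ω, pv ω)))
        ≤ condMutInfo p pu py2 px2 + condMutInfo p px1 py3 (fun ω => (px2 ω, pu ω)) :=
          add_le_add (min_le_left _ _) (min_le_left _ _)
      _ ≤ condMutInfo p px1 (fun ω => (py2 ω, py3 ω)) px2 := by
          rw [hEid]; linarith
  · calc min (condMutInfo p pu py2 px2) (mutInfo p (fun ω => (pu ω, pv ω)) py3)
        + min (condMutInfo p px1 py3 (fun ω => (px2 ω, pu ω)))
            (condMutInfo p (fun ω => (px1 ω, px2 ω)) py3 (fun ω => (pu ω, pv ω)))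
        ≤ mutInfo p (fun ω => (pu ω, pv ω)) py3
            + condMutInfo p (fun ω => (px1 ω, px2 ω)) py3 (fun ω => (pu ω, pv ω)) :=
          add_le_add (min_le_right _ _) (min_le_right _ _)
      _ ≤ mutInfo p (fun ω => (px1 ω, px2 ω)) py3 := by
          rw [hFid]; linarith
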